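/- For every real p < 1, the map A ↦ f_p(A) is an order automorphism of the effect algebra [0, I]: it is a bijection of {A self-adjoint : 0 ≤ A ≤ I} onto itself satisfying A ≤ B ⟺ f_p(A) ≤ f_p(B). -/

import Mathlib

/-!
On `[0, 1]` the Möbius map `f_p` is increasing with inverse `f_{p'}`, where `p' = p/(p-1)` (the
formula of `Real.conjExponent`) is an involution of `(-∞, 1)`. Since the continuous functional
calculus respects composition, `A ↦ f_{p'}(A)` is the inverse of `A ↦ f_p(A)` on effects.
Operator monotonicity comes from the decomposition `f_p(x) = 1/p + (1-p)/p² · (-p (p x + 1 - p)⁻¹)`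
(for `p ≠ 0`) and the antitonicity of inversion on positive invertible elements:
`x ↦ -c (c x + d)⁻¹` is operator monotone wherever `c x + d > 0`.
-/

/-- The scalar function `f_p(x) = x / (p x + 1 - p)`. -/
noncomputable def fScalar (p x : ℝ) : ℝ := x / (p * x + 1 - p)

/-- `f_p` applied to an operator via the continuous functional calculus. -/
noncomputable def fOp (p : ℝ) {H : Type*} [NormedAddCommGroup H] [InnerProductSpace ℂ H]
    [CompleteSpace H] (A : H →L[ℂ] H) : H →L[ℂ] H :=
  cfc (fun x : ℝ => x / (p * x + 1 - p)) A

open Set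

namespace Real

lemma conjExponent_lt_one {p : ℝ} (hp : p < 1) : conjExponent p < 1 := by
  rw [conjExponent, div_lt_one_of_neg (sub_neg.mpr hp)]
  linarith

lemma conjExponent_conjExponent {p : ℝ} (hp : p ≠ 1) : conjExponent (conjExponent p) = p := by
  have hp1 : p - 1 ≠ 0 := sub_ne_zero.mpr hp
  simp only [conjExponent]
  field_simp
  ring

end Real

lemma continuousOn_inv_affine {c d : ℝ} {s : Set ℝ} (hpos : ∀ x ∈ s, 0 < c * x + d) :
    ContinuousOn (fun x : ℝ => (c * x + d)⁻¹) s :=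
  (by fun_prop : Continuous fun x : ℝ => c * x + d).continuousOn.inv₀ fun x hx => (hpos x hx).ne'

section Scalar

variable {p : ℝ}

lemma fScalar_denom_pos (hp : p < 1) {x : ℝ} (hx : x ∈ Icc (0 : ℝ) 1) : 0 < p * x + 1 - p := by
  obtain ⟨hx0, hx1⟩ := hx
  rcases le_or_gt 0 p with h | h <;> nlinarith

lemma continuousOn_fScalar (hp : p < 1) : ContinuousOn (fScalar p) (Icc 0 1) :=
  continuousOn_id.div (by fun_prop) fun _ hx => (fScalar_denom_pos hp hx).ne'

lemma mapsTo_fScalar (hp : p < 1) : MapsTo (fScalar p) (Icc 0 1) (Icc 0 1) := by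
  intro x hx
  have hd := fScalar_denom_pos hp hx
  obtain ⟨hx0, hx1⟩ := hx
  refine ⟨div_nonneg hx0 hd.le, ?_⟩
  rw [fScalar, div_le_one hd]
  nlinarith

lemma leftInvOn_fScalar (hp : p < 1) :
    LeftInvOn (fScalar p.conjExponent) (fScalar p) (Icc 0 1) := by
  intro x hx
  have hd := (fScalar_denom_pos hp hx).ne'
  have hp1 : p - 1 ≠ 0 := sub_ne_zero.mpr hp.ne
  have hdenom : p.conjExponent * fScalar p x + 1 - p.conjExponent = (p * x + 1 - p)⁻¹ := by
    simp only [Real.conjExponent, fScalar]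
    field_simp
    ring
  rw [fScalar, hdenom, div_inv_eq_mul, fScalar, div_mul_cancel₀ x hd]

lemma invOn_fScalar (hp : p < 1) :
    InvOn (fScalar p.conjExponent) (fScalar p) (Icc 0 1) (Icc 0 1) := by
  refine ⟨leftInvOn_fScalar hp, ?_⟩
  simpa only [Real.conjExponent_conjExponent hp.ne] using
    leftInvOn_fScalar (Real.conjExponent_lt_one hp)

lemma fScalar_zero : fScalar 0 = id := by
  ext x
  simp [fScalar]

lemma fScalar_eq_add_mul_neg_mul_inv (hp : p ≠ 0) {x : ℝ} (hx : p * x + (1 - p) ≠ 0) :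
    fScalar p x = 1 / p + (1 - p) / p ^ 2 * (-p * (p * x + (1 - p))⁻¹) := by
  rw [fScalar, add_sub_assoc]
  generalize hd : p * x + (1 - p) = d at *
  field_simp
  linear_combination hd

end Scalar

section Effects

variable {A : Type*} [CStarAlgebra A]

lemma cfc_affine {a : A} (ha : IsSelfAdjoint a) (c d : ℝ) :
    cfc (fun x : ℝ => c * x + d) a = c • a + algebraMap ℝ A d := by
  rw [cfc_add_const d _ a, cfc_const_mul c _ a, cfc_id' ℝ a]

variable [PartialOrder A] [StarOrderedRing A]

variable (A) in
def effects : Set A := {a : A | IsSelfAdjoint a ∧ 0 ≤ a ∧ a ≤ 1}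

lemma spectrum_subset_Icc_of_mem_effects {a : A} (ha : a ∈ effects A) :
    spectrum ℝ a ⊆ Icc 0 1 := by
  obtain ⟨ha, ha0, ha1⟩ := ha
  intro x hx
  refine ⟨spectrum_nonneg_of_nonneg ha0 hx, ?_⟩
  rw [← map_one (algebraMap ℝ A)] at ha1
  exact (le_algebraMap_iff_spectrum_le ha).mp ha1 x hx

lemma mapsTo_cfc_effects {f : ℝ → ℝ} (hf : MapsTo f (Icc 0 1) (Icc 0 1)) :
    MapsTo (cfc f) (effects A) (effects A) := by
  intro a ha
  have hs := spectrum_subset_Icc_of_mem_effects ha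
  exact ⟨cfc_predicate f a, cfc_nonneg fun x hx => (hf (hs hx)).1,
    cfc_le_one f a fun x hx => (hf (hs hx)).2⟩

lemma leftInvOn_cfc_effects {f g : ℝ → ℝ} (hgf : LeftInvOn g f (Icc 0 1))
    (hf : MapsTo f (Icc 0 1) (Icc 0 1)) (hfc : ContinuousOn f (Icc 0 1))
    (hgc : ContinuousOn g (Icc 0 1)) :
    LeftInvOn (cfc g) (cfc f) (effects A) := by
  intro a ha
  have hs := spectrum_subset_Icc_of_mem_effects ha
  have hsa : IsSelfAdjoint a := ha.1
  rw [← cfc_comp' g f a (hgc.mono (hf.mono_left hs).image_subset) (hfc.mono hs) hsa]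
  exact (cfc_congr fun x hx => hgf (hs hx)).trans (cfc_id' ℝ a)

lemma invOn_cfc_effects {f g : ℝ → ℝ} (hgf : InvOn g f (Icc 0 1) (Icc 0 1))
    (hf : MapsTo f (Icc 0 1) (Icc 0 1)) (hg : MapsTo g (Icc 0 1) (Icc 0 1))
    (hfc : ContinuousOn f (Icc 0 1)) (hgc : ContinuousOn g (Icc 0 1)) :
    InvOn (cfc g) (cfc f) (effects A) (effects A) :=
  ⟨leftInvOn_cfc_effects hgf.1 hf hfc hgc, leftInvOn_cfc_effects hgf.2 hg hgc hfc⟩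

lemma cfc_neg_mul_inv_affine_le {a b : A} (ha : IsSelfAdjoint a) (hb : IsSelfAdjoint b)
    {c d : ℝ} (hpos_a : ∀ x ∈ spectrum ℝ a, 0 < c * x + d)
    (hpos_b : ∀ x ∈ spectrum ℝ b, 0 < c * x + d) (hab : a ≤ b) :
    cfc (fun x : ℝ => -c * (c * x + d)⁻¹) a ≤ cfc (fun x : ℝ => -c * (c * x + d)⁻¹) b := by
  set ua := cfcUnits (fun x : ℝ => c * x + d) a fun x hx => (hpos_a x hx).ne'
  set ub := cfcUnits (fun x : ℝ => c * x + d) b fun x hx => (hpos_b x hx).ne'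
  have hua : (0 : A) ≤ ua := cfc_nonneg fun x hx => (hpos_a x hx).le
  have hub : (0 : A) ≤ ub := cfc_nonneg fun x hx => (hpos_b x hx).le
  have hua_eq : (ua : A) = c • a + algebraMap ℝ A d := cfc_affine ha c d
  have hub_eq : (ub : A) = c • b + algebraMap ℝ A d := cfc_affine hb c d
  have hua_inv : (↑ua⁻¹ : A) = cfc (fun x : ℝ => (c * x + d)⁻¹) a := val_inv_cfcUnits ..
  have hub_inv : (↑ub⁻¹ : A) = cfc (fun x : ℝ => (c * x + d)⁻¹) b := val_inv_cfcUnits ..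
  rw [cfc_const_mul (-c) _ a (continuousOn_inv_affine hpos_a),
    cfc_const_mul (-c) _ b (continuousOn_inv_affine hpos_b), ← hua_inv, ← hub_inv]
  rcases le_or_gt 0 c with hc | hc
  · have hinv : (↑ub⁻¹ : A) ≤ ↑ua⁻¹ :=
      CStarAlgebra.inv_le_inv hua (by rw [hua_eq, hub_eq]; gcongr)
    rw [neg_smul, neg_smul, neg_le_neg_iff]
    gcongr
  · have hinv : (↑ua⁻¹ : A) ≤ ↑ub⁻¹ := by
      refine CStarAlgebra.inv_le_inv hub ?_
      rw [hua_eq, hub_eq, add_le_add_iff_right, ← neg_le_neg_iff, ← neg_smul, ← neg_smul]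
      exact smul_le_smul_of_nonneg_left hab (neg_nonneg.mpr hc.le)
    exact smul_le_smul_of_nonneg_left hinv (neg_nonneg.mpr hc.le)

variable {p : ℝ}

lemma fScalar_denom_pos_of_mem_spectrum (hp : p < 1) {a : A} (ha : a ∈ effects A) :
    ∀ x ∈ spectrum ℝ a, 0 < p * x + (1 - p) := fun x hx => by
  linarith [fScalar_denom_pos hp (spectrum_subset_Icc_of_mem_effects ha hx)]

lemma cfc_fScalar_eq (hp : p < 1) (hp0 : p ≠ 0) {a : A} (ha : a ∈ effects A) :
    cfc (fScalar p) a = algebraMap ℝ A (1 / p) +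
      ((1 - p) / p ^ 2) • cfc (fun x => -p * (p * x + (1 - p))⁻¹) a := by
  have hpos := fScalar_denom_pos_of_mem_spectrum hp ha
  have hcont : ContinuousOn (fun x => -p * (p * x + (1 - p))⁻¹) (spectrum ℝ a) :=
    continuousOn_const.mul (continuousOn_inv_affine hpos)
  rw [← cfc_const_mul _ _ a hcont, ← cfc_const_add (1 / p)
    (fun x => (1 - p) / p ^ 2 * (-p * (p * x + (1 - p))⁻¹)) a (continuousOn_const.mul hcont) ha.1]
  exact cfc_congr fun x hx => fScalar_eq_add_mul_neg_mul_inv hp0 (hpos x hx).ne'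

lemma monotoneOn_cfc_fScalar (hp : p < 1) : MonotoneOn (cfc (fScalar p)) (effects A) := by
  intro a ha b hb hab
  rcases eq_or_ne p 0 with rfl | hp0
  · rwa [fScalar_zero, cfc_id ℝ a ha.1, cfc_id ℝ b hb.1]
  have hcoef : 0 ≤ (1 - p) / p ^ 2 := div_nonneg (sub_nonneg.mpr hp.le) (sq_nonneg p)
  rw [cfc_fScalar_eq hp hp0 ha, cfc_fScalar_eq hp hp0 hb]
  exact add_le_add le_rfl (smul_le_smul_of_nonneg_left (cfc_neg_mul_inv_affine_le ha.1 hb.1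
    (fScalar_denom_pos_of_mem_spectrum hp ha) (fScalar_denom_pos_of_mem_spectrum hp hb) hab) hcoef)

end Effects

theorem stmt_9 {H : Type*} [NormedAddCommGroup H] [InnerProductSpace ℂ H] [CompleteSpace H]
    (p : ℝ) (hp : p < 1) :
    Set.BijOn (fOp p) {A : H →L[ℂ] H | IsSelfAdjoint A ∧ 0 ≤ A ∧ A ≤ 1} {A : H →L[ℂ] H | IsSelfAdjoint A ∧ 0 ≤ A ∧ A ≤ 1} ∧
    ∀ A ∈ {A : H →L[ℂ] H | IsSelfAdjoint A ∧ 0 ≤ A ∧ A ≤ 1}, ∀ B ∈ {A : H →L[ℂ] H | IsSelfAdjoint A ∧ 0 ≤ A ∧ A ≤ 1},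
      (A ≤ B ↔ fOp p A ≤ fOp p B) := by
  show BijOn (cfc (fScalar p)) (effects _) (effects _) ∧
    ∀ a ∈ effects (H →L[ℂ] H), ∀ b ∈ effects (H →L[ℂ] H),
      (a ≤ b ↔ cfc (fScalar p) a ≤ cfc (fScalar p) b)
  have hq := Real.conjExponent_lt_one hp
  have hinv : InvOn (cfc (fScalar p.conjExponent)) (cfc (fScalar p))
      (effects (H →L[ℂ] H)) (effects _) :=
    invOn_cfc_effects (invOn_fScalar hp) (mapsTo_fScalar hp) (mapsTo_fScalar hq)
      (continuousOn_fScalar hp) (continuousOn_fScalar hq)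
  refine ⟨hinv.bijOn (mapsTo_cfc_effects (mapsTo_fScalar hp))
    (mapsTo_cfc_effects (mapsTo_fScalar hq)), fun a ha b hb =>
    ⟨fun hab => monotoneOn_cfc_fScalar hp ha hb hab, fun hab => ?_⟩⟩
  have hmono := monotoneOn_cfc_fScalar hq (mapsTo_cfc_effects (mapsTo_fScalar hp) ha)
    (mapsTo_cfc_effects (mapsTo_fScalar hp) hb) hab
  rwa [hinv.1 ha, hinv.1 hb] at hmono
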